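/- Let P and Q be the 2×8 matrices over 𝔽₂ with P = [[1,0,1,0,1,0,1,0],[0,1,0,1,0,1,0,1]] and Q = [[0,0,0,0,1,1,1,0],[1,1,1,1,0,0,0,1]]. Then rank(P + Q) = 1, and the 4×10 block matrix Δ = [[P, I₂],[Q, I₂]] has rank 3. (The feedback wire of the R-S flip-flop exhibits partial feedback.) -/

import Mathlib

/-- The field with two elements. -/
notation "𝔽₂" => ZMod 2

/-- The restriction matrix `P` of the R-S flip-flop: restriction from `H⁰(A)` to
the input that the feedback wire connects. -/
def rsP : Matrix (Fin 2) (Fin 8) 𝔽₂ :=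
  !![1,0,1,0,1,0,1,0;
     0,1,0,1,0,1,0,1]

/-- The restriction matrix `Q` of the R-S flip-flop: restriction from `H⁰(A)` to
the output that the feedback wire connects. -/
def rsQ : Matrix (Fin 2) (Fin 8) 𝔽₂ :=
  !![0,0,0,0,1,1,1,0;
     1,1,1,1,0,0,0,1]

/-!
The rows of `P` sum to the all-ones vector, and so do the rows of `Q`. Hence the two rows of
`P + Q` coincide and the four rows of `Δ` sum to zero, which bounds the ranks by `1` and `3`;
a nonzero entry of `P + Q` and an invertible `3 × 3` minor of `Δ` give the matching lower bounds.
-/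

namespace Matrix

variable {K m n k : Type*} [Field K] [Fintype n]

theorem card_le_rank_of_det_submatrix_ne_zero [Fintype k] [DecidableEq k] (M : Matrix m n K)
    (r : k → m) (c : k → n) (h : (M.submatrix r c).det ≠ 0) : Fintype.card k ≤ M.rank :=
  (rank_of_det_ne_zero h).symm.le.trans (rank_submatrix_le M r c)

theorem one_le_rank_of_ne_zero_entry (M : Matrix m n K) {i : m} {j : n} (h : M i j ≠ 0) :
    1 ≤ M.rank :=
  card_le_rank_of_det_submatrix_ne_zero (k := Fin 1) M ![i] ![j] (by rwa [det_fin_one])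

theorem rank_lt_card_height_of_vecMul_eq_zero [Fintype m] (M : Matrix m n K) {v : m → K}
    (hv : v ≠ 0) (h : v ᵥ* M = 0) : M.rank < Fintype.card m := by
  obtain ⟨i, hi⟩ := Function.ne_iff.mp hv
  have hrow : 1 ≤ (replicateRow (Fin 1) v).rank :=
    one_le_rank_of_ne_zero_entry _ (i := 0) (j := i) hi
  have hmul : replicateRow (Fin 1) v * M = 0 := by
    rw [← replicateRow_vecMul, h, replicateRow_zero]
  have := rank_add_rank_le_card_of_mul_eq_zero hmul
  omega

end Matrix

/-- for the R-S flip-flop, `rank (P + Q) = 1` and the 4×10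
Mayer–Vietoris block matrix `Δ = [[P, I₂],[Q, I₂]]` has rank 3 (partial
feedback). -/
theorem rs_flipflop_partial_feedback :
    (rsP + rsQ).rank = 1 ∧
      (Matrix.fromBlocks rsP (1 : Matrix (Fin 2) (Fin 2) 𝔽₂)
        rsQ (1 : Matrix (Fin 2) (Fin 2) 𝔽₂)).rank = 3 := by
  constructor
  · have hupper := (rsP + rsQ).rank_lt_card_height_of_vecMul_eq_zero (v := 1) one_ne_zero
      (by decide)
    have hlower := (rsP + rsQ).one_le_rank_of_ne_zero_entry (i := 0) (j := 0) (by decide)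
    simp only [Fintype.card_fin] at hupper
    omega
  · set Δ := Matrix.fromBlocks rsP (1 : Matrix (Fin 2) (Fin 2) 𝔽₂) rsQ 1
    have hupper := Δ.rank_lt_card_height_of_vecMul_eq_zero (v := 1) one_ne_zero (by decide)
    have hlower := Δ.card_le_rank_of_det_submatrix_ne_zero
      ![.inl 0, .inl 1, .inr 0] ![.inl 0, .inr 0, .inr 1] (by decide)
    simp only [Fintype.card_sum, Fintype.card_fin] at hupper hlower
    omega
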